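/- arXiv:1308.3396 — 3 statements merged into one kernel-verified Lean document; each statement's English description precedes it below -/
import Mathlib

section
/- Let j ≥ 1 be an integer, let p be an odd integer with p ≥ 2j + 1, and let g(n) = 2p + 1 - ⌈n/3⌉ for integers n ≥ 1. Then for every integer n₀ with 1 ≤ n₀ ≤ 3p, the row index of the j-th iterate satisfies j + 1 ≤ ⌈g^j(n₀)/3⌉ ≤ p - j. -/
/-!
If a card lies in row `k` with `j + 1 ≤ k ≤ p - j`, it moves to position `2p + 1 - k`, whose row
`⌈(2p + 1 - k) / 3⌉` lies between `⌈(p + 1 + j) / 3⌉` and `⌈(2p - j) / 3⌉`, hence between `j + 2` and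
`p - j - 1` as long as `2j + 3 ≤ p`: each collection pushes the card one row further away from both
the top and the bottom row. Starting from `j = 0`, induction gives the bounds.
-/

theorem Rat.ceil_intCast_div_three (n : ℤ) : ⌈(n : ℚ) / 3⌉ = -(-n / 3) := by
  exact_mod_cast Rat.ceil_intCast_div_natCast n 3

theorem ceil_div_three_apply_mem_of_ceil_div_three_mem {p : ℤ} {g : ℤ → ℤ}
    (hg : ∀ n : ℤ, 1 ≤ n → g n = 2 * p + 1 - ⌈(n : ℚ) / 3⌉) {k : ℤ} (hk : 0 ≤ k)
    (hpk : 2 * k + 3 ≤ p) {n : ℤ} (hn : k + 1 ≤ ⌈(n : ℚ) / 3⌉ ∧ ⌈(n : ℚ) / 3⌉ ≤ p - k) :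
    k + 2 ≤ ⌈(g n : ℚ) / 3⌉ ∧ ⌈(g n : ℚ) / 3⌉ ≤ p - k - 1 := by
  rw [Rat.ceil_intCast_div_three] at hn ⊢
  rw [hg n (by omega), Rat.ceil_intCast_div_three]
  omega

theorem card_trick_p3_jth_iterate_row_bounds_general
    (j : ℕ) (p : ℤ) (hpj : 2 * (j : ℤ) + 1 ≤ p)
    (g : ℤ → ℤ) (hg : ∀ n : ℤ, 1 ≤ n → g n = 2 * p + 1 - ⌈(n : ℚ) / 3⌉) :
    ∀ n₀ : ℤ, 1 ≤ n₀ → n₀ ≤ 3 * p →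
      (j : ℤ) + 1 ≤ ⌈(g^[j] n₀ : ℚ) / 3⌉ ∧ ⌈(g^[j] n₀ : ℚ) / 3⌉ ≤ p - j := by
  intro n₀ h₁ h₃
  induction j with
  | zero =>
    rw [Function.iterate_zero_apply, Rat.ceil_intCast_div_three]
    omega
  | succ j ih =>
    rw [Function.iterate_succ_apply']
    have := ceil_div_three_apply_mem_of_ceil_div_three_mem hg (Int.natCast_nonneg j)
      (by omega) (ih (by omega))
    push_cast
    omega

/-- For the `p × 3` card trick function `g n = 2p + 1 - ⌈n/3⌉` with `p` odd and
`p ≥ 2j + 1` (`j ≥ 1`), the row index of the `j`-th iterate satisfies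
`j + 1 ≤ ⌈g^[j] n₀ / 3⌉ ≤ p - j` for every `1 ≤ n₀ ≤ 3p`. -/
theorem card_trick_p3_jth_iterate_row_bounds
    (j : ℕ) (hj : 1 ≤ j) (p : ℤ) (hp : Odd p) (hpj : 2 * (j : ℤ) + 1 ≤ p)
    (g : ℤ → ℤ) (hg : ∀ n : ℤ, 1 ≤ n → g n = 2 * p + 1 - ⌈(n : ℚ) / 3⌉) :
    ∀ n₀ : ℤ, 1 ≤ n₀ → n₀ ≤ 3 * p →
      (j : ℤ) + 1 ≤ ⌈(g^[j] n₀ : ℚ) / 3⌉ ∧ ⌈(g^[j] n₀ : ℚ) / 3⌉ ≤ p - j :=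
  card_trick_p3_jth_iterate_row_bounds_general j p hpj g hg
end

section
/- Let p, q ≥ 3 be odd integers, let i ≥ 0 be an integer, and let h(n) = ((q+1)/2)·p + 1 - ⌈n/q⌉ for integers n ≥ 1. If n = qk - l with 1 ≤ k ≤ p, 0 ≤ l ≤ q - 1, and the row index k satisfies (p+q)/2 + iq + 1 ≤ k ≤ (p+q)/2 + iq + q, then ((p+1)/2 - (i+1))·q - (q-1) ≤ h(n) ≤ ((p+1)/2 - (i+1))·q; that is, h(n) lies in row (p+1)/2 - (i+1). -/
/-!
With `p = 2a + 1` and `q = 2b + 1`, a card in row `k` goes to `h(n) = (b + 1)p + 1 - k`, and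
`(b + 1)p = aq + (a + b + 1) = ((p + 1)/2 - 1)q + (p + q)/2`. Writing `k = (p + q)/2 + iq + j`
with `1 ≤ j ≤ q` therefore gives `h(n) = ((p + 1)/2 - (i + 1))q + 1 - j`, which is a position of
row `(p + 1)/2 - (i + 1)`.
-/

theorem Int.ceil_intCast_mul_sub_div_eq {K : Type*} [Field K] [LinearOrder K]
    [IsStrictOrderedRing K] [FloorRing K] {q k l : ℤ} (hq : 0 < q) (hl0 : 0 ≤ l) (hlq : l < q) :
    ⌈((q * k - l : ℤ) : K) / q⌉ = k := by
  have hqK : (0 : K) < q := by exact_mod_cast hq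
  rw [Int.ceil_eq_iff, lt_div_iff₀ hqK, div_le_iff₀ hqK]
  constructor
  · exact_mod_cast (by linarith : (k - 1) * q < q * k - l)
  · exact_mod_cast (by linarith : q * k - l ≤ k * q)

theorem Int.add_one_ediv_two_mul_of_odd {p q : ℤ} (hp : Odd p) (hq : Odd q) :
    (q + 1) / 2 * p = ((p + 1) / 2 - 1) * q + (p + q) / 2 := by
  obtain ⟨a, rfl⟩ := hp
  obtain ⟨b, rfl⟩ := hq
  have hp' : (2 * a + 1 + 1) / 2 = a + 1 := by omega
  have hq' : (2 * b + 1 + 1) / 2 = b + 1 := by omega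
  have hpq : (2 * a + 1 + (2 * b + 1)) / 2 = a + b + 1 := by omega
  rw [hp', hq', hpq]
  ring

theorem card_trick_pq_block_maps_to_row_general
    (p q : ℤ) (hp : Odd p) (hq : Odd q) (hq3 : 3 ≤ q)
    (i : ℤ)
    (h : ℤ → ℤ)
    (hh : ∀ n : ℤ, 1 ≤ n → h n = (q + 1) / 2 * p + 1 - ⌈(n : ℚ) / q⌉) :
    ∀ n k l : ℤ, n = q * k - l → 1 ≤ k → k ≤ p → 0 ≤ l → l ≤ q - 1 →
      (p + q) / 2 + i * q + 1 ≤ k → k ≤ (p + q) / 2 + i * q + q →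
      ((p + 1) / 2 - (i + 1)) * q - (q - 1) ≤ h n ∧
        h n ≤ ((p + 1) / 2 - (i + 1)) * q := by
  intro n k l hn hk1 _ hl0 hlq hklo hkhi
  have hq0 : 0 < q := by omega
  have hn1 : 1 ≤ n := by nlinarith
  have hrow : ⌈(n : ℚ) / q⌉ = k := hn ▸ Int.ceil_intCast_mul_sub_div_eq hq0 hl0 (by omega)
  have hhn : h n = (q + 1) / 2 * p + 1 - k := by rw [hh n hn1, hrow]
  have hmid := Int.add_one_ediv_two_mul_of_odd hp hq
  constructor <;> linarith

/-- For the `p × q` card trick function (`p, q ≥ 3` odd), a position in the block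
of rows `(p+q)/2 + iq + 1` through `(p+q)/2 + iq + q` maps to row
`(p+1)/2 - (i+1)` in one iteration. -/
theorem card_trick_pq_block_maps_to_row
    (p q : ℤ) (hp : Odd p) (hq : Odd q) (hp3 : 3 ≤ p) (hq3 : 3 ≤ q)
    (i : ℤ) (hi : 0 ≤ i)
    (h : ℤ → ℤ)
    (hh : ∀ n : ℤ, 1 ≤ n → h n = (q + 1) / 2 * p + 1 - ⌈(n : ℚ) / q⌉) :
    ∀ n k l : ℤ, n = q * k - l → 1 ≤ k → k ≤ p → 0 ≤ l → l ≤ q - 1 →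
      (p + q) / 2 + i * q + 1 ≤ k → k ≤ (p + q) / 2 + i * q + q →
      ((p + 1) / 2 - (i + 1)) * q - (q - 1) ≤ h n ∧
        h n ≤ ((p + 1) / 2 - (i + 1)) * q :=
  card_trick_pq_block_maps_to_row_general p q hp hq hq3 i h hh
end

section
/- Let p, q ≥ 3 be odd integers and let h(n) = ((q+1)/2)·p + 1 - ⌈n/q⌉ for integers n ≥ 1. Then for every integer n₀ with 1 ≤ n₀ ≤ pq there exists a positive integer m such that the m-th iterate satisfies h^m(n₀) = (pq+1)/2; that is, (pq+1)/2 is a stable fixed point of h reached from every initial position in finitely many iterations. -/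
/-!
Write `p = 2a + 1`, `q = 2b + 1` and `M = (pq + 1)/2 = (a + 1)q - b`. Then `h` replaces the
displacement `d = n - M` from the midpoint by `⌊(b - d)/q⌋`, which is `-d/q` rounded to the nearest
integer. For `q ≥ 3` this is strictly smaller than `|d|` unless `d = 0`, which it fixes. The
positions `1 ≤ n ≤ pq` are exactly those with `|n - M| < M`, a condition the contraction preserves,
so `h` is only ever applied where its formula holds, and the distance to `M` decreases to `0`.
-/

theorem Function.exists_iterate_eq_of_measure_lt {α : Type*} {f : α → α} {P : α → Prop} {c : α}
    (V : α → ℕ) (hf : ∀ x, P x → x ≠ c → P (f x) ∧ V (f x) < V x) :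
    ∀ x, P x → ∃ m, f^[m] x = c := by
  intro x
  induction x using (measure V).wf.induction with
  | h x ih =>
    intro hx
    by_cases hxc : x = c
    · exact ⟨0, hxc⟩
    obtain ⟨hfx, hlt⟩ := hf x hx hxc
    obtain ⟨m, hm⟩ := ih (f x) hlt hfx
    exact ⟨m + 1, hm⟩

theorem Int.abs_sub_ediv_two_mul_add_one_lt {b d : ℤ} (hb : 1 ≤ b) (hd : d ≠ 0) :
    |(b - d) / (2 * b + 1)| < |d| := by
  have hq : 0 < 2 * b + 1 := by omega
  have hdiv := Int.mul_ediv_add_emod (b - d) (2 * b + 1)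
  have hmod := Int.emod_nonneg (b - d) hq.ne'
  have hmod' := Int.emod_lt_of_pos (b - d) hq
  rw [abs_lt]
  rcases hd.lt_or_gt with hd | hd
  · rw [abs_of_neg hd]
    constructor <;> nlinarith
  · rw [abs_of_pos hd]
    constructor <;> nlinarith

def cardTrick (p q n : ℤ) : ℤ := (q + 1) / 2 * p + 1 - ⌈(n : ℚ) / q⌉

theorem cardTrick_sub_midpoint {p q : ℤ} (hp : Odd p) (hq : Odd q) (hq0 : 0 < q) (n : ℤ) :
    cardTrick p q n - (p * q + 1) / 2 = ((q - 1) / 2 - (n - (p * q + 1) / 2)) / q := by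
  obtain ⟨a, rfl⟩ := hp
  obtain ⟨b, rfl⟩ := hq
  have hceil : ⌈(n : ℚ) / (2 * b + 1 : ℤ)⌉ = -((-n) / (2 * b + 1)) := by
    lift 2 * b + 1 to ℕ using hq0.le with q
    exact_mod_cast Rat.ceil_intCast_div_natCast n q
  have hM : ((2 * a + 1) * (2 * b + 1) + 1) / 2 = 2 * a * b + a + b + 1 := by
    rw [show (2 * a + 1) * (2 * b + 1) + 1 = 2 * (2 * a * b + a + b + 1) by ring,
      Int.mul_ediv_cancel_left _ two_ne_zero]
  rw [cardTrick, hceil, hM, show (2 * b + 1 + 1) / 2 = b + 1 by omega,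
    show (2 * b + 1 - 1) / 2 = b by omega,
    show b - (n - (2 * a * b + a + b + 1)) = -n + (a + 1) * (2 * b + 1) by ring,
    Int.add_mul_ediv_right _ _ hq0.ne']
  ring

theorem cardTrick_midpoint {p q : ℤ} (hp : Odd p) (hq : Odd q) (hq0 : 0 < q) :
    cardTrick p q ((p * q + 1) / 2) = (p * q + 1) / 2 := by
  have h := cardTrick_sub_midpoint hp hq hq0 ((p * q + 1) / 2)
  rw [sub_self, sub_zero, Int.ediv_eq_zero_of_lt (a := (q - 1) / 2) (by omega) (by omega)] at h
  omega

theorem abs_cardTrick_sub_midpoint_lt {p q : ℤ} (hp : Odd p) (hq : Odd q) (hq3 : 3 ≤ q) {n : ℤ}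
    (hn : n ≠ (p * q + 1) / 2) :
    |cardTrick p q n - (p * q + 1) / 2| < |n - (p * q + 1) / 2| := by
  rw [cardTrick_sub_midpoint hp hq (by omega)]
  obtain ⟨b, rfl⟩ := hq
  rw [show (2 * b + 1 - 1) / 2 = b by omega]
  exact Int.abs_sub_ediv_two_mul_add_one_lt (by omega) (sub_ne_zero.mpr hn)

theorem card_trick_pq_stable_fixed_point_general
    (p q : ℤ) (hp : Odd p) (hq : Odd q) (hq3 : 3 ≤ q)
    (h : ℤ → ℤ)
    (hh : ∀ n : ℤ, 1 ≤ n → h n = (q + 1) / 2 * p + 1 - ⌈(n : ℚ) / q⌉) :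
    ∀ n₀ : ℤ, 1 ≤ n₀ → n₀ ≤ p * q →
      ∃ m : ℕ, 0 < m ∧ h^[m] n₀ = (p * q + 1) / 2 := by
  have hh_card : ∀ n, 1 ≤ n → h n = cardTrick p q n := hh
  intro n₀ hn₀ hn₀pq
  have hpq : p * q = 2 * ((p * q + 1) / 2) - 1 := by
    obtain ⟨k, hk⟩ := hp.mul hq
    omega
  set M := (p * q + 1) / 2
  have hstep : ∀ n, |n - M| < M → n ≠ M →
      |h n - M| < M ∧ (h n - M).natAbs < (n - M).natAbs := by
    intro n hn hnM
    have hn1 : 1 ≤ n := by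
      rw [abs_lt] at hn
      omega
    have hlt := abs_cardTrick_sub_midpoint_lt hp hq hq3 hnM
    rw [← hh_card n hn1] at hlt
    exact ⟨hlt.trans hn, by zify; exact hlt⟩
  obtain ⟨m, hm⟩ := Function.exists_iterate_eq_of_measure_lt
    (P := fun n ↦ |n - M| < M) (fun n ↦ (n - M).natAbs) hstep n₀
    (by rw [abs_lt]; omega)
  refine ⟨m + 1, m.succ_pos, ?_⟩
  rw [Function.iterate_succ_apply', hm, hh_card M (by omega), cardTrick_midpoint hp hq (by omega)]

/-- For the `p × q` card trick function (`p, q ≥ 3` odd), every starting position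
`1 ≤ n₀ ≤ pq` reaches the midpoint `(pq+1)/2` after finitely many iterations:
the midpoint is a stable fixed point. -/
theorem card_trick_pq_stable_fixed_point
    (p q : ℤ) (hp : Odd p) (hq : Odd q) (hp3 : 3 ≤ p) (hq3 : 3 ≤ q)
    (h : ℤ → ℤ)
    (hh : ∀ n : ℤ, 1 ≤ n → h n = (q + 1) / 2 * p + 1 - ⌈(n : ℚ) / q⌉) :
    ∀ n₀ : ℤ, 1 ≤ n₀ → n₀ ≤ p * q →
      ∃ m : ℕ, 0 < m ∧ h^[m] n₀ = (p * q + 1) / 2 :=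
  card_trick_pq_stable_fixed_point_general p q hp hq hq3 h hh
end
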